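/- arXiv:1604.07456 — 2 statements merged into one kernel-verified Lean document; each statement's English description precedes it below -/
import Mathlib

section
/- The elements ỹ_1,…,ỹ_k pairwise commute: ỹ_i ỹ_j = ỹ_j ỹ_i for all 1 ≤ i, j ≤ k; moreover, for k ≥ 2, ỹ_1 T_1 z_1 = T_1 z_1 T_1 ỹ_1 T_1. -/
noncomputable section

variable {G : Type*} [Group G]

/-- `ascProd T a n = T_a * T_{a+1} * ⋯ * T_{a+n-1}` (`n` factors, ascending). -/
def ascProd (T : ℕ → G) (a : ℕ) : ℕ → G
  | 0 => 1
  | n + 1 => ascProd T a n * T (a + n)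

/-- `descProd T b n = T_{b+n-1} * ⋯ * T_b` (`n` factors, descending). -/
def descProd (T : ℕ → G) (b : ℕ) : ℕ → G
  | 0 => 1
  | n + 1 => T (b + n) * descProd T b n

/-- The ascending train `T_{a↗b}`: for `a ≤ b` it is `T_a T_{a+1} ⋯ T_{b-1}`;
for `a > b` it is, by convention, `T*_{a↘b} = T_{a-1}⁻¹ ⋯ T_b⁻¹`. -/
def up (T : ℕ → G) (a b : ℕ) : G :=
  if a ≤ b then ascProd T a (b - a) else (ascProd T b (a - b))⁻¹

/-- The descending train `T_{a↘b}`: for `a ≥ b` it is `T_{a-1} T_{a-2} ⋯ T_b`;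
for `a < b` it is, by convention, `T*_{a↗b} = T_a⁻¹ ⋯ T_{b-1}⁻¹`. -/
def down (T : ℕ → G) (a b : ℕ) : G :=
  if b ≤ a then descProd T b (a - b) else (descProd T a (b - a))⁻¹

/-- The starred ascending train `T*_{a↗b} = T_a⁻¹ ⋯ T_{b-1}⁻¹` (for `a ≤ b`),
with the analogous convention for `a > b`. -/
def upStar (T : ℕ → G) (a b : ℕ) : G := up (fun n => (T n)⁻¹) a b

/-- The starred descending train `T*_{a↘b} = T_{a-1}⁻¹ ⋯ T_b⁻¹` (for `a ≥ b`),
with the analogous convention for `a < b`. -/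
def downStar (T : ℕ → G) (a b : ℕ) : G := down (fun n => (T n)⁻¹) a b

/-- `σ_{a,b}(c) = c+1` if `a ≤ c < b`, `c−1` if `a ≥ c > b`, and `c` otherwise. -/
def sigmaShift (a b c : ℕ) : ℕ :=
  if a ≤ c ∧ c < b then c + 1 else if b < c ∧ c ≤ a then c - 1 else c

/-- `ỹ_i := T_{i↘1} · T_{1↗k} · y_k · T*_{k↘i}`. -/
def ytilde (T y : ℕ → G) (k i : ℕ) : G :=
  down T i 1 * up T 1 k * y k * downStar T k i

section Helpers

variable {G : Type*} [Group G]

lemma ascProd_succ_front (T : ℕ → G) (a n : ℕ) :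
    ascProd T a (n + 1) = T a * ascProd T (a + 1) n := by
  induction n with
  | zero => simp [ascProd]
  | succ n ih =>
    have h : a + 1 + n = a + (n + 1) := by omega
    rw [ascProd, ih, ascProd, mul_assoc, h]

lemma descProd_succ_front (T : ℕ → G) (a n : ℕ) :
    descProd T a (n + 1) = descProd T (a + 1) n * T a := by
  induction n with
  | zero => simp [descProd]
  | succ n ih =>
    have h : a + 1 + n = a + (n + 1) := by omega
    rw [descProd, ih, descProd, mul_assoc, h]

lemma inv_ascProd (T : ℕ → G) (a n : ℕ) :
    (ascProd T a n)⁻¹ = descProd (fun m => (T m)⁻¹) a n := by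
  induction n with
  | zero => simp [ascProd, descProd]
  | succ n ih => rw [ascProd, descProd, mul_inv_rev, ih]

lemma inv_descProd (T : ℕ → G) (a n : ℕ) :
    (descProd T a n)⁻¹ = ascProd (fun m => (T m)⁻¹) a n := by
  induction n with
  | zero => simp [ascProd, descProd]
  | succ n ih => rw [ascProd, descProd, mul_inv_rev, ih]

lemma commute_ascProd (T : ℕ → G) (g : G) (a n : ℕ)
    (h : ∀ m, m < n → Commute g (T (a + m))) : Commute g (ascProd T a n) := by
  induction n with
  | zero => simpa [ascProd] using Commute.one_right g
  | succ n ih =>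
    rw [ascProd]
    exact (ih fun m hm => h m (by omega)).mul_right (h n (by omega))

lemma commute_descProd (T : ℕ → G) (g : G) (a n : ℕ)
    (h : ∀ m, m < n → Commute g (T (a + m))) : Commute g (descProd T a n) := by
  induction n with
  | zero => simpa [descProd] using Commute.one_right g
  | succ n ih =>
    rw [descProd]
    exact (h n (by omega)).mul_right (ih fun m hm => h m (by omega))

end Helpers
section Words

variable {G : Type*} [Group G]

/-- `t` commutes with `s (t E t) s` when `s` commutes with `E` and `s,t` braid. -/
lemma braid_word_a (E s t : G) (cE : s * E = E * s) (c3 : s * t * s = t * s * t) :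
    t * (s * (t * E * t) * s) = s * (t * E * t) * s * t := by
  have r3' : ∀ x : G, t * (s * (t * x)) = s * (t * (s * x)) := fun x => by
    simp only [← mul_assoc]; rw [c3]
  have rE : ∀ x : G, s * (E * x) = E * (s * x) := fun x => by
    simp only [← mul_assoc]; rw [cE]
  have c3t : s * (t * s) = t * (s * t) := by simp only [← mul_assoc]; rw [c3]
  simp only [mul_assoc]
  conv_lhs => rw [r3', rE, c3t]

/-- `s` commutes with `t (s E s) t` when `E` commutes with `t` and `s,t` braid. -/
lemma braid_word_b (E s t : G) (c1 : E * t = t * E) (c3 : s * t * s = t * s * t) :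
    s * (t * (s * E * s) * t) = t * (s * E * s) * t * s := by
  have r3 : ∀ x : G, s * (t * (s * x)) = t * (s * (t * x)) := fun x => by
    simp only [← mul_assoc]; rw [c3]
  have r1' : ∀ x : G, t * (E * x) = E * (t * x) := fun x => by
    simp only [← mul_assoc]; rw [c1]
  have c3t' : t * (s * t) = s * (t * s) := by simp only [← mul_assoc]; rw [c3]
  simp only [mul_assoc]
  conv_lhs => rw [r3, r1', c3t']

/-- `s E s` commutes with `t (s E s) t` given the commutations. -/
lemma braid_word_c (E s t : G) (c1 : E * t = t * E)
    (c2 : E * s * E * s = s * E * s * E) (c3 : s * t * s = t * s * t) :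
    s * E * s * (t * (s * E * s) * t) = t * (s * E * s) * t * (s * E * s) := by
  have r1 : ∀ x : G, E * (t * x) = t * (E * x) := fun x => by
    simp only [← mul_assoc]; rw [c1]
  have r1' : ∀ x : G, t * (E * x) = E * (t * x) := fun x => (r1 x).symm
  have r3 : ∀ x : G, s * (t * (s * x)) = t * (s * (t * x)) := fun x => by
    simp only [← mul_assoc]; rw [c3]
  have r3' : ∀ x : G, t * (s * (t * x)) = s * (t * (s * x)) := fun x => (r3 x).symm
  have r2 : ∀ x : G, s * (E * (s * (E * x))) = E * (s * (E * (s * x))) := fun x => by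
    simp only [← mul_assoc]; rw [← c2]
  have c3t : s * (t * s) = t * (s * t) := by simp only [← mul_assoc]; rw [c3]
  simp only [mul_assoc]
  -- LHS word: s E s t s E s t  →  s t E s E t s t
  conv_lhs => rw [r3, r1', r1]
  -- RHS word: t s E s t s E s  →  s t E s E t s t
  conv_rhs => rw [r3, r1', r1, r3', r2, c3t]

end Words

section Words2

variable {G : Type*} [Group G]

/-- The base case `[ỹ_1, ỹ_2] = 1`, abstractly. -/
lemma base_local (a Y Y2 D W : G)
    (e0 : W = Y * (a * D * a)⁻¹)
    (hdd : a * D * a * D = D * (a * D * a))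
    (hYD : Y * D = D * Y)
    (ey2 : a⁻¹ * Y = Y2 * a)
    (hyy2 : Y * (a⁻¹ * Y * a⁻¹) = a⁻¹ * Y * a⁻¹ * Y) :
    W * (a * W * a) = a * W * a * W := by
  have hDaD : Commute a (D * a * D) := by
    show a * (D * a * D) = (D * a * D) * a
    calc a * (D * a * D) = a * D * a * D := by group
      _ = D * (a * D * a) := hdd
      _ = (D * a * D) * a := by group
  have hID : Commute a (D⁻¹ * (a⁻¹ * D⁻¹)) := by
    have h := hDaD.inv_right
    simpa [mul_inv_rev, mul_assoc] using h
  have cA : Commute a (Y * Y2) := by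
    show a * (Y * Y2) = Y * Y2 * a
    have hY2 : Y2 = a⁻¹ * Y * a⁻¹ := by rw [ey2]; group
    rw [hY2]
    calc a * (Y * (a⁻¹ * Y * a⁻¹)) = a * (a⁻¹ * Y * a⁻¹ * Y) := by rw [hyy2]
      _ = Y * a⁻¹ * Y := by group
      _ = Y * (a⁻¹ * Y * a⁻¹) * a := by group
  have cYD : Commute Y D := hYD
  have rY : ∀ x : G, D⁻¹ * (Y * x) = Y * (D⁻¹ * x) := fun x => by
    simp only [← mul_assoc]
    rw [← cYD.inv_right.eq]
  have rE : ∀ x : G, a⁻¹ * (Y * x) = Y2 * (a * x) := fun x => by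
    simp only [← mul_assoc]; rw [ey2]
  have eX : W * a * W = (Y * Y2) * (a * (D⁻¹ * (a⁻¹ * D⁻¹)) * a⁻¹) := by
    rw [e0]
    conv_lhs => simp only [mul_inv_rev, mul_assoc, inv_mul_cancel_left,
      mul_inv_cancel_left, inv_mul_cancel, mul_one]
    conv_lhs => rw [rY, rE]
    group
  have cX : Commute a (W * a * W) := by
    rw [eX]
    exact cA.mul_right
      (((Commute.refl a).mul_right hID).mul_right (Commute.refl a).inv_right)
  calc W * (a * W * a) = W * a * W * a := by group
    _ = a * (W * a * W) := cX.eq.symm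
    _ = a * W * a * W := by group

/-- The mixed relation, abstractly. -/
lemma mixed_word (a Y D Z W : G)
    (e0 : W = Y * (a * D * a)⁻¹)
    (hzD : Z * D = D * Z)
    (hm : Z * a * Y * a⁻¹ = a⁻¹ * Y * a⁻¹ * Z) :
    W * a * Z = a * Z * a * W * a := by
  have rm : ∀ x : G, Z * (a * (Y * (a⁻¹ * x))) = a⁻¹ * (Y * (a⁻¹ * (Z * x))) :=
    fun x => by simp only [← mul_assoc]; rw [hm]
  have czD : D⁻¹ * Z = Z * D⁻¹ := by
    have cZD : Commute Z D := hzD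
    exact (cZD.inv_right.eq).symm
  rw [e0]
  conv_lhs => simp only [mul_inv_rev, mul_assoc, inv_mul_cancel_left,
    mul_inv_cancel_left, inv_mul_cancel, mul_one]
  conv_lhs => rw [czD]
  conv_rhs => simp only [mul_inv_rev, mul_assoc, inv_mul_cancel_left,
    mul_inv_cancel_left, inv_mul_cancel, mul_one]
  conv_rhs => rw [rm]
  group

end Words2
section Struct

variable {G : Type*} [Group G]

/-- `T j` commutes with `T_a ⋯ T_{a+n-1} T_{a+n-1} ⋯ T_a` for `a+1 ≤ j ≤ a+n-1`. -/
lemma Dcomm (k : ℕ) (T : ℕ → G)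
    (hbraid : ∀ i, 1 ≤ i → i + 2 ≤ k →
      T i * T (i + 1) * T i = T (i + 1) * T i * T (i + 1))
    (hcomm : ∀ i j, 1 ≤ i → i + 1 ≤ k → 1 ≤ j → j + 1 ≤ k →
      (i + 1 < j ∨ j + 1 < i) → T i * T j = T j * T i) :
    ∀ n a j, 1 ≤ a → a + n ≤ k → a + 1 ≤ j → j + 1 ≤ a + n →
      Commute (T j) (ascProd T a n * descProd T a n) := by
  intro n
  induction n with
  | zero => intro a j h1 h2 h3 h4; omega
  | succ n ih =>
    intro a j h1 h2 h3 h4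
    have hD : ascProd T a (n + 1) * descProd T a (n + 1)
        = T a * (ascProd T (a + 1) n * descProd T (a + 1) n) * T a := by
      rw [ascProd_succ_front, descProd_succ_front]
      simp only [mul_assoc]
    rw [hD]
    rcases eq_or_lt_of_le h3 with hj | hj
    · -- j = a + 1
      subst hj
      obtain ⟨m, rfl⟩ : ∃ m, n = m + 1 := ⟨n - 1, by omega⟩
      have hD2 : ascProd T (a + 1) (m + 1) * descProd T (a + 1) (m + 1)
          = T (a + 1) * (ascProd T (a + 2) m * descProd T (a + 2) m) * T (a + 1) := by
        rw [ascProd_succ_front, descProd_succ_front]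
        have : a + 1 + 1 = a + 2 := by omega
        rw [this]
        simp only [mul_assoc]
      rw [hD2]
      have hsD : T a * (ascProd T (a + 2) m * descProd T (a + 2) m)
          = (ascProd T (a + 2) m * descProd T (a + 2) m) * T a := by
        refine Commute.mul_right ?_ ?_
        · refine commute_ascProd T (T a) (a + 2) m fun l hl => ?_
          exact hcomm a (a + 2 + l) (by omega) (by omega) (by omega) (by omega)
            (Or.inl (by omega))
        · refine commute_descProd T (T a) (a + 2) m fun l hl => ?_
          exact hcomm a (a + 2 + l) (by omega) (by omega) (by omega) (by omega)
            (Or.inl (by omega))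
      have hb := hbraid a (by omega) (by omega)
      exact braid_word_a (ascProd T (a + 2) m * descProd T (a + 2) m)
        (T a) (T (a + 1)) hsD hb
    · -- a + 2 ≤ j
      have c1 : Commute (T j) (T a) :=
        (hcomm a j (by omega) (by omega) (by omega) (by omega) (Or.inl (by omega))).symm
      have c2 : Commute (T j) (ascProd T (a + 1) n * descProd T (a + 1) n) :=
        ih (a + 1) j (by omega) (by omega) (by omega) (by omega)
      exact (c1.mul_right c2).mul_right c1

end Struct

section Struct2

variable {G : Type*} [Group G]

lemma yExpand (k : ℕ) (T y : ℕ → G)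
    (hy : ∀ i, 1 ≤ i → i + 1 ≤ k → y (i + 1) = (T i)⁻¹ * y i * (T i)⁻¹) :
    ∀ m, m + 1 ≤ k → y (m + 1) =
      descProd (fun n => (T n)⁻¹) 1 m * y 1 * ascProd (fun n => (T n)⁻¹) 1 m := by
  intro m
  induction m with
  | zero => intro _; simp [ascProd, descProd]
  | succ m ih =>
    intro hm
    have h1 : (1 : ℕ) + m = m + 1 := by omega
    rw [hy (m + 1) (by omega) hm, ih (by omega), descProd, ascProd, h1]
    simp only [mul_assoc]

lemma ytilde_one (k : ℕ) (T y : ℕ → G) (hk : 1 ≤ k)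
    (hy : ∀ i, 1 ≤ i → i + 1 ≤ k → y (i + 1) = (T i)⁻¹ * y i * (T i)⁻¹) :
    ytilde T y k 1 = y 1 * (ascProd T 1 (k - 1) * descProd T 1 (k - 1))⁻¹ := by
  have hk' : k - 1 + 1 = k := by omega
  have hyk : y k = descProd (fun n => (T n)⁻¹) 1 (k - 1) * y 1 *
      ascProd (fun n => (T n)⁻¹) 1 (k - 1) := by
    conv_lhs => rw [← hk']
    exact yExpand k T y hy (k - 1) (by omega)
  rw [ytilde, down, up, downStar, down]
  simp only [hk, if_pos, le_refl, Nat.sub_self, Nat.one_le_iff_ne_zero]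
  rw [hyk, ← inv_ascProd, ← inv_descProd]
  simp only [descProd, mul_inv_rev, one_mul]
  group

lemma ytilde_succ (k : ℕ) (T y : ℕ → G) (i : ℕ) (hi : 1 ≤ i) (hik : i + 1 ≤ k) :
    ytilde T y k (i + 1) = T i * ytilde T y k i * T i := by
  have h1 : down T (i + 1) 1 = T i * down T i 1 := by
    rw [down, down, if_pos (by omega), if_pos hi]
    obtain ⟨m, rfl⟩ : ∃ m, i = m + 1 := ⟨i - 1, by omega⟩
    have e1 : m + 1 + 1 - 1 = m + 1 := by omega
    have e2 : m + 1 - 1 = m := by omega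
    have e3 : 1 + m = m + 1 := by omega
    rw [e1, e2, descProd, e3]
  have h2 : downStar T k (i + 1) = downStar T k i * T i := by
    rw [downStar, downStar, down, down, if_pos (by omega : i + 1 ≤ k), if_pos (by omega : i ≤ k)]
    have e1 : k - i = (k - (i + 1)) + 1 := by omega
    rw [e1, descProd_succ_front]
    simp
  rw [ytilde, ytilde, h1, h2]
  simp only [mul_assoc]

end Struct2
/-- The elements `ỹ_1,…,ỹ_k` pairwise commute, and for `k ≥ 2` one has
`ỹ_1 T_1 z_1 = T_1 z_1 T_1 ỹ_1 T_1`. -/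
theorem ytilde_commute_and_mixed_relation (k : ℕ) (T y z : ℕ → G)
    (hbraid : ∀ i, 1 ≤ i → i + 2 ≤ k →
      T i * T (i + 1) * T i = T (i + 1) * T i * T (i + 1))
    (hcomm : ∀ i j, 1 ≤ i → i + 1 ≤ k → 1 ≤ j → j + 1 ≤ k →
      (i + 1 < j ∨ j + 1 < i) → T i * T j = T j * T i)
    (hyT : ∀ i j, 1 ≤ i → i ≤ k → 1 ≤ j → j + 1 ≤ k → i ≠ j → i ≠ j + 1 →
      y i * T j = T j * y i)
    (hzT : ∀ i j, 1 ≤ i → i ≤ k → 1 ≤ j → j + 1 ≤ k → i ≠ j → i ≠ j + 1 →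
      z i * T j = T j * z i)
    (hy : ∀ i, 1 ≤ i → i + 1 ≤ k → y (i + 1) = (T i)⁻¹ * y i * (T i)⁻¹)
    (hz : ∀ i, 1 ≤ i → i + 1 ≤ k → z (i + 1) = T i * z i * T i)
    (hyy : ∀ i j, 1 ≤ i → i ≤ k → 1 ≤ j → j ≤ k → y i * y j = y j * y i)
    (hzz : ∀ i j, 1 ≤ i → i ≤ k → 1 ≤ j → j ≤ k → z i * z j = z j * z i)
    (hmix : 2 ≤ k → z 1 * T 1 * y 1 * (T 1)⁻¹ = (T 1)⁻¹ * y 1 * (T 1)⁻¹ * z 1) :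
    (∀ i j, 1 ≤ i → i ≤ k → 1 ≤ j → j ≤ k →
      ytilde T y k i * ytilde T y k j = ytilde T y k j * ytilde T y k i) ∧
    (2 ≤ k →
      ytilde T y k 1 * T 1 * z 1 = T 1 * z 1 * T 1 * ytilde T y k 1 * T 1) := by
  -- recursion for ytilde
  have hrec : ∀ i, 1 ≤ i → i + 1 ≤ k →
      ytilde T y k (i + 1) = T i * ytilde T y k i * T i :=
    fun i hi hik => ytilde_succ k T y i hi hik
  -- T j commutes with the full twist δ = A * B
  have hTd : ∀ j, 2 ≤ j → j + 1 ≤ k →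
      Commute (T j) (ascProd T 1 (k - 1) * descProd T 1 (k - 1)) := by
    intro j h2 hjk
    exact Dcomm k T hbraid hcomm (k - 1) 1 j (by omega) (by omega) (by omega) (by omega)
  have hy1 : 1 ≤ k →
      ytilde T y k 1 = y 1 * (ascProd T 1 (k - 1) * descProd T 1 (k - 1))⁻¹ :=
    fun hk => ytilde_one k T y hk hy
  -- ỹ_1 commutes with T j for j ≥ 2
  have hcomm1 : ∀ j, 2 ≤ j → j + 1 ≤ k → Commute (ytilde T y k 1) (T j) := by
    intro j h2 hjk
    rw [hy1 (by omega)]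
    refine Commute.mul_left ?_ ?_
    · exact hyT 1 j (by omega) (by omega) (by omega) hjk (by omega) (by omega)
    · exact (hTd j h2 hjk).symm.inv_left
  -- ỹ_i commutes with T j for j ∉ {i-1, i}
  have hcommI : ∀ i j, 1 ≤ i → i ≤ k → 1 ≤ j → j + 1 ≤ k →
      (j + 1 < i ∨ i < j) → Commute (ytilde T y k i) (T j) := by
    intro i
    induction i using Nat.strong_induction_on with
    | _ i IH =>
      intro j hi hik hj hjk hij
      match i, hi with
      | 1, _ => exact hcomm1 j (by omega) hjk
      | (m + 2), _ =>
        rw [hrec (m + 1) (by omega) (by omega)]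
        rcases hij with h | h
        · rcases Nat.lt_or_ge (j + 1) (m + 1) with h' | h'
          · have c1 : Commute (ytilde T y k (m + 1)) (T j) :=
              IH (m + 1) (by omega) j (by omega) (by omega) hj hjk (Or.inl h')
            have c2 : Commute (T (m + 1)) (T j) :=
              hcomm (m + 1) j (by omega) (by omega) hj hjk (Or.inr (by omega))
            exact (Commute.mul_left c2 c1).mul_left c2
          · have hjm : j = m := by omega
            subst hjm
            rw [hrec j (by omega) (by omega)]
            have c1 : Commute (ytilde T y k j) (T (j + 1)) :=
              IH j (by omega) (j + 1) (by omega) (by omega) (by omega) (by omega)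
                (Or.inr (by omega))
            have hb := hbraid j (by omega) (by omega)
            exact (braid_word_b (ytilde T y k j) (T j) (T (j + 1)) c1 hb).symm
        · have c1 : Commute (ytilde T y k (m + 1)) (T j) :=
            IH (m + 1) (by omega) j (by omega) (by omega) hj hjk (Or.inr (by omega))
          have c2 : Commute (T (m + 1)) (T j) :=
            hcomm (m + 1) j (by omega) (by omega) hj hjk (Or.inl (by omega))
          exact (Commute.mul_left c2 c1).mul_left c2
  -- the full twist decomposition (k ≥ 2)
  have hdelta : 2 ≤ k → ascProd T 1 (k - 1) * descProd T 1 (k - 1) =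
      T 1 * (ascProd T 2 (k - 2) * descProd T 2 (k - 2)) * T 1 := by
    intro h2
    have e : k - 1 = (k - 2) + 1 := by omega
    rw [e, ascProd_succ_front, descProd_succ_front]
    have e2 : (1 : ℕ) + 1 = 2 := rfl
    rw [e2]
    simp only [mul_assoc]
  have hyd' : 2 ≤ k → Commute (y 1) (ascProd T 2 (k - 2) * descProd T 2 (k - 2)) := by
    intro h2
    refine Commute.mul_right ?_ ?_
    · refine commute_ascProd T (y 1) 2 (k - 2) fun m hm => ?_
      exact hyT 1 (2 + m) (by omega) (by omega) (by omega) (by omega) (by omega) (by omega)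
    · refine commute_descProd T (y 1) 2 (k - 2) fun m hm => ?_
      exact hyT 1 (2 + m) (by omega) (by omega) (by omega) (by omega) (by omega) (by omega)
  have hzd' : 2 ≤ k → Commute (z 1) (ascProd T 2 (k - 2) * descProd T 2 (k - 2)) := by
    intro h2
    refine Commute.mul_right ?_ ?_
    · refine commute_ascProd T (z 1) 2 (k - 2) fun m hm => ?_
      exact hzT 1 (2 + m) (by omega) (by omega) (by omega) (by omega) (by omega) (by omega)
    · refine commute_descProd T (z 1) 2 (k - 2) fun m hm => ?_
      exact hzT 1 (2 + m) (by omega) (by omega) (by omega) (by omega) (by omega) (by omega)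
  have hdd' : 2 ≤ k → Commute (ascProd T 1 (k - 1) * descProd T 1 (k - 1))
      (ascProd T 2 (k - 2) * descProd T 2 (k - 2)) := by
    intro h2
    refine Commute.mul_right ?_ ?_
    · refine commute_ascProd T _ 2 (k - 2) fun m hm => ?_
      exact (hTd (2 + m) (by omega) (by omega)).symm
    · refine commute_descProd T _ 2 (k - 2) fun m hm => ?_
      exact (hTd (2 + m) (by omega) (by omega)).symm
  -- ỹ_1 in the δ-form
  have e0 : 2 ≤ k → ytilde T y k 1 =
      y 1 * (T 1 * (ascProd T 2 (k - 2) * descProd T 2 (k - 2)) * T 1)⁻¹ := by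
    intro h2
    rw [hy1 (by omega), hdelta h2]
  -- local commutation ỹ_i ỹ_{i+1} = ỹ_{i+1} ỹ_i
  have hlocal : ∀ i, 1 ≤ i → i + 1 ≤ k →
      Commute (ytilde T y k i) (ytilde T y k (i + 1)) := by
    intro i
    induction i using Nat.strong_induction_on with
    | _ i IH =>
      intro hi hik
      match i, hi with
      | 1, _ =>
        have h2 : 2 ≤ k := hik
        have hdd : T 1 * (ascProd T 2 (k - 2) * descProd T 2 (k - 2)) * T 1 *
            (ascProd T 2 (k - 2) * descProd T 2 (k - 2)) =
            (ascProd T 2 (k - 2) * descProd T 2 (k - 2)) *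
            (T 1 * (ascProd T 2 (k - 2) * descProd T 2 (k - 2)) * T 1) := by
          have h := (hdd' h2).eq
          rw [hdelta h2] at h
          exact h
        have ey2 : (T 1)⁻¹ * y 1 = y 2 * T 1 := by
          rw [hy 1 (by omega) h2]; group
        have hyy2 : y 1 * ((T 1)⁻¹ * y 1 * (T 1)⁻¹) =
            (T 1)⁻¹ * y 1 * (T 1)⁻¹ * y 1 := by
          have h0 := hyy 1 2 (by omega) (by omega) (by omega) (by omega)
          rwa [hy 1 (by omega) h2] at h0
        have key := base_local (T 1) (y 1) (y 2)
          (ascProd T 2 (k - 2) * descProd T 2 (k - 2)) (ytilde T y k 1)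
          (e0 h2) hdd (hyd' h2).eq ey2 hyy2
        rw [hrec 1 (by omega) (by omega)]
        exact key
      | (m + 2), _ =>
        rw [hrec (m + 2) (by omega) (by omega), hrec (m + 1) (by omega) (by omega)]
        have c1 : Commute (ytilde T y k (m + 1)) (T (m + 2)) :=
          hcommI (m + 1) (m + 2) (by omega) (by omega) (by omega) (by omega)
            (Or.inr (by omega))
        have c2 : ytilde T y k (m + 1) * T (m + 1) * ytilde T y k (m + 1) * T (m + 1) =
            T (m + 1) * ytilde T y k (m + 1) * T (m + 1) * ytilde T y k (m + 1) := by
          have h := (IH (m + 1) (by omega) (by omega) (by omega)).eq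
          rw [hrec (m + 1) (by omega) (by omega)] at h
          simp only [← mul_assoc] at h
          exact h
        have c3 := hbraid (m + 1) (by omega) (by omega)
        exact braid_word_c (ytilde T y k (m + 1)) (T (m + 1)) (T (m + 2)) c1 c2 c3
  -- general commutation
  have hgen : ∀ j i, 1 ≤ i → 1 ≤ j → j ≤ k → i < j →
      Commute (ytilde T y k i) (ytilde T y k j) := by
    intro j
    induction j using Nat.strong_induction_on with
    | _ j IH =>
      intro i hi hj hjk hij
      rcases eq_or_lt_of_le (show i + 1 ≤ j from hij) with h | h
      · rw [← h]; exact hlocal i hi (by omega)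
      · obtain ⟨m, rfl⟩ : ∃ m, j = m + 1 := ⟨j - 1, by omega⟩
        rw [hrec m (by omega) (by omega)]
        have cT : Commute (ytilde T y k i) (T m) :=
          hcommI i m hi (by omega) (by omega) (by omega) (Or.inr (by omega))
        have cy : Commute (ytilde T y k i) (ytilde T y k m) :=
          IH m (by omega) i hi (by omega) (by omega) (by omega)
        exact (cT.mul_right cy).mul_right cT
  constructor
  · intro i j hi hik hj hjk
    rcases lt_trichotomy i j with h | h | h
    · exact (hgen j i hi hj hjk h).eq
    · rw [h]
    · exact ((hgen i j hj hi hik h).symm).eq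
  · -- mixed relation
    intro h2
    exact mixed_word (T 1) (y 1) (ascProd T 2 (k - 2) * descProd T 2 (k - 2)) (z 1)
      (ytilde T y k 1) (e0 h2) (hzd' h2).eq (hmix h2)
end
end

section
/- Let v = (v_1,…,v_k) be pairwise distinct points of (0,1)∖{t}, and let (i_1,…,i_l) be a sequence of indices in {1,…,k} that is admissible for v, with the additional property that no entry of any intermediate tuple next_{i_j,…,i_l}(v) equals t. Let v′ = (v_1,…,v_k, t) be the (k+1)-tuple obtained by adjoining a new stationary point at t; then (i_1,…,i_l) is admissible for v′. Let i be the rank of t among the entries of v′ and i′ the rank of t among the entries of the final tuple next_{i_1,…,i_l}(v′). Then T*_{k+1↘i′} · B^{(k+1)}(v′; i_1,…,i_l) = B^{(k)}(v; i_1,…,i_l) · T*_{k+1↘i} in G. (This expresses that adjoining a stationary strand at the corner point t transforms the special braid by the homomorphism φ₋ that fixes the generators T_i, z_i, y_i.) -/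
noncomputable section

variable {G : Type*} [Group G]

/-- `next(x)`: for `x ≠ t` in `(0,1)`, `next(x) = x − t` if `x > t`,
and `next(x) = x + (1 − t)` if `x < t`. -/
noncomputable def nextPt (t x : ℝ) : ℝ := if t < x then x - t else x + (1 - t)

/-- The (1-based) rank of the entry `v i` in the increasing ordering of the entries
of the tuple `v` (the entries being pairwise distinct). -/
def rankOf {k : ℕ} (v : Fin k → ℝ) (i : Fin k) : ℕ :=
  (Finset.univ.filter fun j => v j ≤ v i).card

/-- `next_i(v)`: replace the `i`-th entry of `v` by `next(v_i)`. -/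
noncomputable def moveAt {k : ℕ} (t : ℝ) (v : Fin k → ℝ) (i : Fin k) : Fin k → ℝ :=
  Function.update v i (nextPt t (v i))

/-- The braid element `b_i(v)`: with `a` the rank of `v_i` in `v` and `a′` the rank of
`next(v_i)` in `next_i(v)`, it is `T_{a′↘a} · z_a` if `v_i < t` and
`T*_{a′↗a} · ỹ_a` if `v_i > t`. -/
noncomputable def bmove {k : ℕ} (T y z : ℕ → G) (t : ℝ) (v : Fin k → ℝ) (i : Fin k) : G :=
  if v i < t then
    down T (rankOf (moveAt t v i) i) (rankOf v i) * z (rankOf v i)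
  else
    upStar T (rankOf (moveAt t v i) i) (rankOf v i) * ytilde T y k (rankOf v i)

/-- `next_{i₁,…,i_l}(u)`: moves are applied from right to left. -/
noncomputable def nextSeq {k : ℕ} (t : ℝ) (u : Fin k → ℝ) : List (Fin k) → (Fin k → ℝ)
  | [] => u
  | i :: rest => moveAt t (nextSeq t u rest) i

/-- A sequence of indices is admissible for `u` if at every stage the entries are pairwise
distinct and the entry to be moved is distinct from `t`. -/
def AdmissibleSeq {k : ℕ} (t : ℝ) (u : Fin k → ℝ) : List (Fin k) → Prop
  | [] => Function.Injective u
  | i :: rest => AdmissibleSeq t u rest ∧ nextSeq t u rest i ≠ t ∧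
      Function.Injective (moveAt t (nextSeq t u rest) i)

/-- The special braid `B(u; i₁,…,i_l) = b_{i₁}(next_{i₂,…,i_l}(u)) ⋯ b_{i_l}(u)`. -/
noncomputable def specialBraid {k : ℕ} (T y z : ℕ → G) (t : ℝ) (u : Fin k → ℝ) :
    List (Fin k) → G
  | [] => 1
  | i :: rest => bmove T y z t (nextSeq t u rest) i * specialBraid T y z t u rest


/-! Write `D_m = T*_{k+1↘m} = T_k⁻¹ ⋯ T_m⁻¹`, where `m` is the rank of the corner point `t`.
Conjugation by `D_m` sends `T_{j+1}` to `T_j` for `j ≥ m`, fixes `T_j` for `j + 1 < m` and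
`z_a` for `a < m`, and sends `ỹ^{(k+1)}_{a+1}` to `ỹ^{(k)}_a` for `a ≥ m`. A strand crossing `t`
changes `m` by one, and the mismatch is absorbed by the crossing `T_m` via `D_m T_m = D_{m+1}`.
So every factor satisfies `D_{m'} b_i(v′) = b_i(v) D_m`, and the special braids telescope. -/

theorem descProd_add (f : ℕ → G) (b m n : ℕ) :
    descProd f b (m + n) = descProd f (b + m) n * descProd f b m := by
  induction n with
  | zero => simp [descProd]
  | succ n ih => rw [← add_assoc, descProd, ih, descProd, mul_assoc, add_assoc]

theorem ascProd_add (f : ℕ → G) (b m n : ℕ) :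
    ascProd f b (m + n) = ascProd f b m * ascProd f (b + m) n := by
  induction n with
  | zero => simp [ascProd]
  | succ n ih => rw [← add_assoc, ascProd, ih, ascProd, mul_assoc, add_assoc]

theorem descProd_succ' (f : ℕ → G) (b n : ℕ) :
    descProd f b (n + 1) = descProd f (b + 1) n * f b := by
  rw [add_comm, descProd_add]; simp [descProd]

theorem ascProd_succ' (f : ℕ → G) (b n : ℕ) :
    ascProd f b (n + 1) = f b * ascProd f (b + 1) n := by
  rw [add_comm, ascProd_add]; simp [ascProd]

theorem descProd_inv (f : ℕ → G) (b n : ℕ) :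
    descProd (fun j => (f j)⁻¹) b n = (ascProd f b n)⁻¹ := by
  induction n with
  | zero => simp [descProd, ascProd]
  | succ n ih => rw [descProd, ih, ascProd, mul_inv_rev]

theorem semiconjBy_descProd {a : G} {f g : ℕ → G} {b c n : ℕ}
    (h : ∀ j < n, SemiconjBy a (f (b + j)) (g (c + j))) :
    SemiconjBy a (descProd f b n) (descProd g c n) := by
  induction n with
  | zero => exact SemiconjBy.one_right a
  | succ n ih => exact (h n n.lt_succ_self).mul_right (ih fun j hj => h j (by omega))

theorem semiconjBy_ascProd {a : G} {f g : ℕ → G} {b c n : ℕ}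
    (h : ∀ j < n, SemiconjBy a (f (b + j)) (g (c + j))) :
    SemiconjBy a (ascProd f b n) (ascProd g c n) := by
  induction n with
  | zero => exact SemiconjBy.one_right a
  | succ n ih => exact (ih fun j hj => h j (by omega)).mul_right (h n n.lt_succ_self)

theorem down_of_le (T : ℕ → G) {a b : ℕ} (h : b ≤ a) : down T a b = descProd T b (a - b) :=
  if_pos h

theorem up_of_le (T : ℕ → G) {a b : ℕ} (h : a ≤ b) : up T a b = ascProd T a (b - a) :=
  if_pos h

theorem upStar_of_le (T : ℕ → G) {a b : ℕ} (h : a ≤ b) :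
    upStar T a b = (down T b a)⁻¹ := by
  rw [upStar, up_of_le _ h, down_of_le _ h, ← inv_inv (ascProd _ _ _), ← descProd_inv]
  simp only [inv_inv]

theorem upStar_of_ge (T : ℕ → G) {a b : ℕ} (h : b ≤ a) : upStar T a b = down T a b := by
  rcases h.eq_or_lt with rfl | h
  · simp [upStar, up, down, ascProd, descProd]
  · rw [upStar, up, if_neg (by omega), down_of_le _ h.le, ← descProd_inv]
    simp only [inv_inv]

/-- `T*_{k+1↘m} = T_k⁻¹ ⋯ T_m⁻¹`, without the case distinction hidden in `downStar`. -/
def cornerTrain (T : ℕ → G) (k m : ℕ) : G := descProd (fun j => (T j)⁻¹) m (k + 1 - m)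

theorem downStar_succ_eq_cornerTrain (T : ℕ → G) {k m : ℕ} (h : m ≤ k + 1) :
    downStar T (k + 1) m = cornerTrain T k m :=
  down_of_le _ h

section cornerTrain

variable {T : ℕ → G} {k m : ℕ}

theorem cornerTrain_mul_self (h : m ≤ k) :
    cornerTrain T k m * T m = cornerTrain T k (m + 1) := by
  rw [cornerTrain, cornerTrain, show k + 1 - m = k - m + 1 by omega, descProd_succ',
    inv_mul_cancel_right, show k + 1 - (m + 1) = k - m by omega]

theorem cornerTrain_eq_inv_mul (h : m ≤ k) :
    cornerTrain T k m = (T k)⁻¹ * descProd (fun j => (T j)⁻¹) m (k - m) := by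
  rw [cornerTrain, show k + 1 - m = k - m + 1 by omega, descProd, show m + (k - m) = k by omega]

theorem commute_cornerTrain {x : G} (h : ∀ q, m ≤ q → q ≤ k → Commute x (T q)) :
    Commute x (cornerTrain T k m) :=
  semiconjBy_descProd fun j hj => (h (m + j) (by omega) (by omega)).inv_right

end cornerTrain

structure BraidRelations (k : ℕ) (T : ℕ → G) : Prop where
  braid : ∀ i, 1 ≤ i → i + 2 ≤ k + 1 → T i * T (i + 1) * T i = T (i + 1) * T i * T (i + 1)
  comm : ∀ i j, 1 ≤ i → i + 1 ≤ k + 1 → 1 ≤ j → j + 1 ≤ k + 1 →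
    (i + 1 < j ∨ j + 1 < i) → T i * T j = T j * T i

def FarCommute (k : ℕ) (T x : ℕ → G) : Prop :=
  ∀ i j, 1 ≤ i → i ≤ k + 1 → 1 ≤ j → j + 1 ≤ k + 1 → i ≠ j → i ≠ j + 1 →
    x i * T j = T j * x i

theorem commute_cornerTrain_of_farCommute {k : ℕ} {T x : ℕ → G} (hx : FarCommute k T x)
    {m a : ℕ} (ha : 1 ≤ a) (ham : a < m) : Commute (cornerTrain T k m) (x a) :=
  (commute_cornerTrain fun q hq hqk =>
    hx a q ha (by omega) (by omega) (by omega) (by omega) (by omega)).symm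

namespace BraidRelations

variable {k : ℕ} {T : ℕ → G}

theorem commute_T (hT : BraidRelations k T) {i j : ℕ} (hi : 1 ≤ i) (hij : i + 1 < j)
    (hj : j ≤ k) : Commute (T i) (T j) :=
  hT.comm i j hi (by omega) (by omega) (by omega) (Or.inl hij)

theorem semiconjBy_ascProd_T (hT : BraidRelations k T) {m n j : ℕ} (hm : 1 ≤ m)
    (hmj : m ≤ j) (hjn : j + 1 < m + n) (hn : m + n ≤ k + 1) :
    SemiconjBy (ascProd T m n) (T j) (T (j + 1)) := by
  set P := ascProd T m (j - m)
  set Q := ascProd T (j + 2) (m + n - (j + 2))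
  have hsplit : ascProd T m n = P * (T j * (T (j + 1) * Q)) := by
    rw [show n = (j - m) + ((m + n - (j + 2)) + 1 + 1) by omega, ascProd_add, ascProd_succ',
      ascProd_succ', show m + (j - m) = j by omega]
  have hP : Commute (T (j + 1)) P :=
    semiconjBy_ascProd fun q hq => (hT.commute_T (by omega) (by omega) (by omega)).symm
  have hQ : Commute (T j) Q :=
    semiconjBy_ascProd fun q hq => hT.commute_T (by omega) (by omega) (by omega)
  rw [hsplit]
  calc P * (T j * (T (j + 1) * Q)) * T j = P * (T j * T (j + 1) * T j) * Q := by
        simp only [mul_assoc, hQ.eq]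
    _ = P * (T (j + 1) * T j * T (j + 1)) * Q := by rw [hT.braid j (by omega) (by omega)]
    _ = T (j + 1) * (P * (T j * (T (j + 1) * Q))) := by
        simp only [← mul_assoc, hP.eq]

theorem semiconjBy_cornerTrain (hT : BraidRelations k T) {m j : ℕ} (hm : 1 ≤ m) (hmj : m ≤ j)
    (hjk : j + 1 ≤ k) : SemiconjBy (cornerTrain T k m) (T (j + 1)) (T j) := by
  rw [cornerTrain, descProd_inv, SemiconjBy.inv_symm_left_iff]
  exact hT.semiconjBy_ascProd_T hm hmj (by omega) (by omega)

theorem commute_cornerTrain_T (hT : BraidRelations k T) {m p : ℕ} (hp : 1 ≤ p)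
    (hpm : p + 1 < m) : Commute (cornerTrain T k m) (T p) :=
  (commute_cornerTrain fun _ hq hqk => hT.commute_T hp (by omega) hqk).symm

theorem semiconjBy_cornerTrain_descProd (hT : BraidRelations k T) {m b n : ℕ} (hm : 1 ≤ m)
    (hmb : m ≤ b) (hbn : b + n ≤ k) :
    SemiconjBy (cornerTrain T k m) (descProd T (b + 1) n) (descProd T b n) :=
  semiconjBy_descProd fun j hj => by
    rw [add_right_comm]; exact hT.semiconjBy_cornerTrain hm (by omega) (by omega)

theorem semiconjBy_cornerTrain_descProd_inv (hT : BraidRelations k T) {m b n : ℕ} (hm : 1 ≤ m)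
    (hmb : m ≤ b) (hbn : b + n ≤ k) :
    SemiconjBy (cornerTrain T k m) (descProd (fun j => (T j)⁻¹) (b + 1) n)
      (descProd (fun j => (T j)⁻¹) b n) := by
  rw [descProd_inv, descProd_inv, SemiconjBy.inv_right_iff]
  exact semiconjBy_ascProd fun j hj => by
    rw [add_right_comm]; exact hT.semiconjBy_cornerTrain hm (by omega) (by omega)

theorem semiconjBy_cornerTrain_upStar (hT : BraidRelations k T) {m a a' : ℕ} (hm : 1 ≤ m)
    (hma : m ≤ a) (hma' : m ≤ a') (hak : a ≤ k) (ha'k : a' ≤ k) :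
    SemiconjBy (cornerTrain T k m) (upStar T (a' + 1) (a + 1)) (upStar T a' a) := by
  rcases le_total a' a with h | h
  · rw [upStar_of_le _ h, upStar_of_le _ (by omega), down_of_le _ h, down_of_le _ (by omega),
      SemiconjBy.inv_right_iff, Nat.add_sub_add_right]
    exact hT.semiconjBy_cornerTrain_descProd hm hma' (by omega)
  · rw [upStar_of_ge _ h, upStar_of_ge _ (by omega), down_of_le _ h, down_of_le _ (by omega),
      Nat.add_sub_add_right]
    exact hT.semiconjBy_cornerTrain_descProd hm hma (by omega)

theorem commute_cornerTrain_down (hT : BraidRelations k T) {m a a' : ℕ} (ha : 1 ≤ a)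
    (ha' : 1 ≤ a') (ham : a < m) (ha'm : a' < m) : Commute (cornerTrain T k m) (down T a' a) := by
  have h : ∀ b n, 1 ≤ b → b + n < m → Commute (cornerTrain T k m) (descProd T b n) :=
    fun b n hb hbn => semiconjBy_descProd fun j hj => hT.commute_cornerTrain_T (by omega) (by omega)
  unfold down
  split_ifs
  · exact h a (a' - a) ha (by omega)
  · exact (h a' (a - a') ha' (by omega)).inv_right

theorem cornerTrain_mul_down (hT : BraidRelations k T) {m b c : ℕ} (hb : 1 ≤ b) (hbm : b ≤ m)
    (hmc : m ≤ c) (hck : c ≤ k) :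
    cornerTrain T k m * down T (c + 1) b = down T c b * cornerTrain T k (m + 1) := by
  set L := descProd T b (m - b)
  have hsplit : ∀ n, descProd T b (m - b + n) = descProd T m n * L := fun n => by
    rw [descProd_add, Nat.add_sub_cancel' hbm]
  have hL : Commute (cornerTrain T k (m + 1)) L :=
    semiconjBy_descProd fun j hj => hT.commute_cornerTrain_T (by omega) (by omega)
  rw [down_of_le _ (by omega), down_of_le _ (by omega), show c + 1 - b = m - b + (c - m + 1) by
    omega, show c - b = m - b + (c - m) by omega, hsplit, hsplit, descProd_succ']
  calc cornerTrain T k m * (descProd T (m + 1) (c - m) * T m * L)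
      = descProd T m (c - m) * (cornerTrain T k m * T m) * L := by
        rw [← mul_assoc, ← mul_assoc, (hT.semiconjBy_cornerTrain_descProd (by omega) le_rfl
          (by omega)).eq, mul_assoc _ (cornerTrain T k m)]
    _ = descProd T m (c - m) * L * cornerTrain T k (m + 1) := by
        rw [cornerTrain_mul_self (by omega), mul_assoc, hL.eq, mul_assoc]

theorem cornerTrain_succ_mul_upStar (hT : BraidRelations k T) {m a a' : ℕ} (ha' : 1 ≤ a')
    (ha'm : a' ≤ m) (hma : m ≤ a) (hak : a ≤ k) :
    cornerTrain T k (m + 1) * upStar T a' (a + 1) = upStar T a' a * cornerTrain T k m := by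
  have h := hT.cornerTrain_mul_down ha' ha'm hma hak
  rw [upStar_of_le _ (by omega), upStar_of_le _ (by omega), eq_inv_mul_iff_mul_eq,
    ← mul_assoc, ← h, mul_inv_cancel_right]

theorem cornerTrain_succ_mul_up_one (hT : BraidRelations k T) {m : ℕ} (hm : 1 ≤ m)
    (hmk : m ≤ k) :
    cornerTrain T k (m + 1) * up T 1 (k + 1)
      = up T 1 (k + 1) * descProd (fun j => (T j)⁻¹) m (k - m) := by
  set P := ascProd T 1 (m - 1)
  set A := ascProd T m (k + 1 - m)
  have hsplit : up T 1 (k + 1) = P * A := by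
    rw [up_of_le _ (by omega), show k + 1 - 1 = m - 1 + (k + 1 - m) by omega, ascProd_add,
      Nat.add_sub_cancel' hm]
  have hP : Commute (cornerTrain T k (m + 1)) P :=
    semiconjBy_ascProd fun j hj => hT.commute_cornerTrain_T (by omega) (by omega)
  have hA : SemiconjBy A (descProd (fun j => (T j)⁻¹) m (k - m)) (cornerTrain T k (m + 1)) := by
    rw [cornerTrain, show k + 1 - (m + 1) = k - m by omega]
    refine semiconjBy_descProd fun j hj => ?_
    rw [add_right_comm]
    exact (hT.semiconjBy_ascProd_T hm (by omega) (by omega) (by omega)).inv_right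
  rw [hsplit, ← mul_assoc, hP.eq, mul_assoc, mul_assoc, hA.eq]

theorem cornerTrain_mul_ytilde_succ (hT : BraidRelations k T) {y : ℕ → G}
    (hyT : FarCommute k T y)
    (hy : ∀ i, 1 ≤ i → i + 1 ≤ k + 1 → y (i + 1) = (T i)⁻¹ * y i * (T i)⁻¹)
    {m a : ℕ} (hm : 1 ≤ m) (hma : m ≤ a) (hak : a ≤ k) :
    cornerTrain T k m * ytilde T y (k + 1) (a + 1) = ytilde T y k a * cornerTrain T k m := by
  have hup1 := hT.cornerTrain_succ_mul_up_one hm (by omega)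
  have hE : Commute (y (k + 1)) (descProd (fun j => (T j)⁻¹) m (k - m)) :=
    semiconjBy_descProd fun j (hj : j < k - m) => (show Commute (y (k + 1)) (T (m + j)) from
      hyT _ _ (by omega) le_rfl (by omega) (by omega) (by omega) (by omega)).inv_right
  have hcons := (cornerTrain_eq_inv_mul (T := T) (by omega : m ≤ k)).symm
  generalize descProd (fun j => (T j)⁻¹) m (k - m) = E at hup1 hE hcons
  have hup : up T 1 (k + 1) * (T k)⁻¹ = up T 1 k := by
    rw [up_of_le _ (by omega), up_of_le _ (by omega), show k + 1 - 1 = k - 1 + 1 by omega, ascProd,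
      show 1 + (k - 1) = k by omega, mul_inv_cancel_right]
  have hdownStar :
      cornerTrain T k m * downStar T (k + 1) (a + 1) = downStar T k a * cornerTrain T k m := by
    rw [downStar, downStar, down_of_le _ (by omega), down_of_le _ hak, Nat.add_sub_add_right]
    exact (hT.semiconjBy_cornerTrain_descProd_inv hm hma (by omega)).eq
  unfold ytilde
  calc cornerTrain T k m
        * (down T (a + 1) 1 * up T 1 (k + 1) * y (k + 1) * downStar T (k + 1) (a + 1))
      = down T a 1 * (cornerTrain T k (m + 1) * up T 1 (k + 1)) * y (k + 1)
          * downStar T (k + 1) (a + 1) := by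
        rw [← mul_assoc (down T a 1), ← hT.cornerTrain_mul_down le_rfl (by omega) hma hak]
        simp only [mul_assoc]
    _ = down T a 1 * up T 1 (k + 1) * (E * y (k + 1)) * downStar T (k + 1) (a + 1) := by
        rw [hup1]; simp only [mul_assoc]
    _ = down T a 1 * (up T 1 (k + 1) * (T k)⁻¹) * y k * ((T k)⁻¹ * E)
          * downStar T (k + 1) (a + 1) := by
        rw [← hE.eq, hy k (by omega) le_rfl]; simp only [mul_assoc]
    _ = down T a 1 * up T 1 k * y k * downStar T k a * cornerTrain T k m := by
        rw [hup, hcons, mul_assoc _ (cornerTrain T k m), hdownStar]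
        simp only [mul_assoc]

end BraidRelations

section Ranks

variable {k : ℕ}

def countBelow (t : ℝ) (u : Fin k → ℝ) : ℕ := (Finset.univ.filter fun j => u j < t).card

theorem one_le_rankOf (v : Fin k → ℝ) (i : Fin k) : 1 ≤ rankOf v i :=
  Finset.card_pos.mpr ⟨i, Finset.mem_filter.mpr ⟨Finset.mem_univ i, le_rfl⟩⟩

theorem rankOf_le (v : Fin k → ℝ) (i : Fin k) : rankOf v i ≤ k :=
  (Finset.card_filter_le _ _).trans_eq (Finset.card_fin k)

theorem rankOf_le_countBelow {v : Fin k → ℝ} {t : ℝ} {i : Fin k} (h : v i < t) :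
    rankOf v i ≤ countBelow t v :=
  Finset.card_le_card fun j hj => by
    simp only [Finset.mem_filter] at hj ⊢; exact ⟨hj.1, hj.2.trans_lt h⟩

theorem countBelow_lt_rankOf {v : Fin k → ℝ} {t : ℝ} {i : Fin k} (h : t < v i) :
    countBelow t v < rankOf v i := by
  refine Finset.card_lt_card ⟨fun j hj => ?_, fun hsub => ?_⟩
  · simp only [Finset.mem_filter] at hj ⊢; exact ⟨hj.1, (hj.2.trans h).le⟩
  · have := (Finset.mem_filter.mp (hsub (Finset.mem_filter.mpr ⟨Finset.mem_univ i, le_rfl⟩))).2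
    exact this.not_gt h

theorem countBelow_update (t c : ℝ) (u : Fin k → ℝ) (i : Fin k) :
    countBelow t (Function.update u i c) + (if u i < t then 1 else 0)
      = countBelow t u + (if c < t then 1 else 0) := by
  simp only [countBelow, Finset.card_filter]
  rw [← Finset.sum_erase_add _ _ (Finset.mem_univ i),
    ← Finset.sum_erase_add _ _ (Finset.mem_univ i),
    Finset.sum_congr rfl fun j hj => by rw [Function.update_of_ne (Finset.ne_of_mem_erase hj)],
    Function.update_self]
  omega

theorem rankOf_snoc_castSucc (u : Fin k → ℝ) (c : ℝ) (i : Fin k) :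
    rankOf (Fin.snoc u c) (Fin.castSucc i) = rankOf u i + if c ≤ u i then 1 else 0 := by
  simp only [rankOf, Finset.card_filter, Fin.sum_univ_castSucc, Fin.snoc_castSucc, Fin.snoc_last]

theorem rankOf_snoc_last {u : Fin k → ℝ} {t : ℝ} (hu : ∀ j, u j ≠ t) :
    rankOf (Fin.snoc u t) (Fin.last k) = countBelow t u + 1 := by
  simp only [rankOf, countBelow, Finset.card_filter, Fin.sum_univ_castSucc, Fin.snoc_castSucc,
    Fin.snoc_last, le_refl, if_true]
  congr 1
  exact Finset.sum_congr rfl fun j _ => if_congr ⟨fun h => h.lt_of_ne (hu j), le_of_lt⟩ rfl rfl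

end Ranks

section Snoc

variable {k : ℕ}

theorem moveAt_snoc (t : ℝ) (u : Fin k → ℝ) (i : Fin k) :
    moveAt t (Fin.snoc u t) (Fin.castSucc i) = Fin.snoc (moveAt t u i) t := by
  rw [moveAt, moveAt, Fin.snoc_castSucc, Fin.snoc_update]

theorem nextSeq_snoc (t : ℝ) (v : Fin k → ℝ) (L : List (Fin k)) :
    nextSeq t (Fin.snoc v t) (L.map Fin.castSucc) = Fin.snoc (nextSeq t v L) t := by
  induction L with
  | nil => rfl
  | cons i L ih => rw [List.map_cons, nextSeq, nextSeq, ih, moveAt_snoc]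

theorem admissibleSeq_snoc {t : ℝ} {v : Fin k → ℝ} {L : List (Fin k)}
    (hadm : AdmissibleSeq t v L) (hnt : ∀ n, ∀ j, nextSeq t v (L.drop n) j ≠ t) :
    AdmissibleSeq t (Fin.snoc v t) (L.map Fin.castSucc) := by
  induction L with
  | nil => exact Fin.snoc_injective_iff.mpr ⟨hadm, fun ⟨j, hj⟩ => hnt 0 j hj⟩
  | cons i L ih =>
    refine ⟨ih hadm.1 fun n => hnt (n + 1), ?_, ?_⟩
    · rw [nextSeq_snoc, Fin.snoc_castSucc]
      exact hadm.2.1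
    · rw [nextSeq_snoc, moveAt_snoc]
      exact Fin.snoc_injective_iff.mpr ⟨hadm.2.2, fun ⟨j, hj⟩ => hnt 0 j hj⟩

end Snoc

section SpecialBraid

variable {k : ℕ} {T y z : ℕ → G}

theorem cornerTrain_mul_bmove_snoc (hT : BraidRelations k T) (hyT : FarCommute k T y)
    (hy : ∀ i, 1 ≤ i → i + 1 ≤ k + 1 → y (i + 1) = (T i)⁻¹ * y i * (T i)⁻¹)
    (hzT : FarCommute k T z) {t : ℝ} {u : Fin k → ℝ} {i : Fin k} (hu : ∀ j, u j ≠ t)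
    (hw : ∀ j, moveAt t u i j ≠ t) :
    cornerTrain T k (rankOf (Fin.snoc (moveAt t u i) t) (Fin.last k))
        * bmove T y z t (Fin.snoc u t) (Fin.castSucc i)
      = bmove T y z t u i * cornerTrain T k (rankOf (Fin.snoc u t) (Fin.last k)) := by
  have hcount : countBelow t (moveAt t u i) + _ = _ := countBelow_update t (nextPt t (u i)) u i
  have ha := one_le_rankOf u i
  have ha' := one_le_rankOf (moveAt t u i) i
  have hak := rankOf_le u i
  have ha'k := rankOf_le (moveAt t u i) i
  have hwi : moveAt t u i i = nextPt t (u i) := Function.update_self _ _ _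
  rw [rankOf_snoc_last hu, rankOf_snoc_last hw]
  simp only [bmove, moveAt_snoc, Fin.snoc_castSucc, rankOf_snoc_castSucc, hwi]
  rcases lt_or_gt_of_ne (hu i) with hlt | hgt <;>
    rcases lt_or_gt_of_ne (hwi ▸ hw i) with hlt' | hgt'
  · have h₁ := rankOf_le_countBelow hlt
    have h₂ := rankOf_le_countBelow (hwi ▸ hlt' : moveAt t u i i < t)
    simp only [if_pos hlt, if_pos hlt', if_neg hlt.not_ge, if_neg hlt'.not_ge, add_zero]
      at hcount ⊢
    rw [show countBelow t (moveAt t u i) = countBelow t u by omega]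
    exact ((hT.commute_cornerTrain_down ha ha' (by omega) (by omega)).mul_right
      (commute_cornerTrain_of_farCommute hzT ha (by omega))).eq
  · have h₁ := rankOf_le_countBelow hlt
    have h₂ := countBelow_lt_rankOf (hwi ▸ hgt' : t < moveAt t u i i)
    simp only [if_pos hlt, if_neg hgt'.not_gt, if_neg hlt.not_ge, if_pos hgt'.le, add_zero]
      at hcount ⊢
    rw [show countBelow t u = countBelow t (moveAt t u i) + 1 by omega, ← mul_assoc,
      hT.cornerTrain_mul_down ha (by omega) (by omega) ha'k, mul_assoc,
      (commute_cornerTrain_of_farCommute hzT ha (by omega)).eq, mul_assoc]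
  · have h₁ := countBelow_lt_rankOf hgt
    have h₂ := rankOf_le_countBelow (hwi ▸ hlt' : moveAt t u i i < t)
    simp only [if_neg hgt.not_gt, if_pos hlt', if_pos hgt.le, if_neg hlt'.not_ge, add_zero]
      at hcount ⊢
    rw [show countBelow t (moveAt t u i) = countBelow t u + 1 by omega, ← mul_assoc,
      hT.cornerTrain_succ_mul_upStar ha' (by omega) (by omega) hak, mul_assoc,
      hT.cornerTrain_mul_ytilde_succ hyT hy (by omega) (by omega) hak, ← mul_assoc]
  · have h₁ := countBelow_lt_rankOf hgt
    have h₂ := countBelow_lt_rankOf (hwi ▸ hgt' : t < moveAt t u i i)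
    simp only [if_neg hgt.not_gt, if_neg hgt'.not_gt, if_pos hgt.le, if_pos hgt'.le] at hcount ⊢
    rw [show countBelow t (moveAt t u i) = countBelow t u by omega, ← mul_assoc,
      (hT.semiconjBy_cornerTrain_upStar (by omega) (by omega) (by omega) hak ha'k).eq, mul_assoc,
      hT.cornerTrain_mul_ytilde_succ hyT hy (by omega) (by omega) hak, ← mul_assoc]

theorem cornerTrain_mul_specialBraid_snoc (hT : BraidRelations k T) (hyT : FarCommute k T y)
    (hy : ∀ i, 1 ≤ i → i + 1 ≤ k + 1 → y (i + 1) = (T i)⁻¹ * y i * (T i)⁻¹)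
    (hzT : FarCommute k T z) {t : ℝ} {v : Fin k → ℝ} {L : List (Fin k)}
    (hnt : ∀ n, ∀ j, nextSeq t v (L.drop n) j ≠ t) :
    cornerTrain T k (rankOf (Fin.snoc (nextSeq t v L) t) (Fin.last k))
        * specialBraid T y z t (Fin.snoc v t) (L.map Fin.castSucc)
      = specialBraid T y z t v L * cornerTrain T k (rankOf (Fin.snoc v t) (Fin.last k)) := by
  induction L with
  | nil => simp only [nextSeq, List.map_nil, specialBraid, mul_one, one_mul]
  | cons i L ih =>
    rw [List.map_cons, specialBraid, specialBraid, nextSeq_snoc, nextSeq, ← mul_assoc,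
      cornerTrain_mul_bmove_snoc hT hyT hy hzT (u := nextSeq t v L) (hnt 1) (hnt 0), mul_assoc,
      ih fun n => hnt (n + 1), mul_assoc]

end SpecialBraid

theorem specialBraid_snoc_corner_point_general (k : ℕ) (T y z : ℕ → G)
    (hbraid : ∀ i, 1 ≤ i → i + 2 ≤ k + 1 →
      T i * T (i + 1) * T i = T (i + 1) * T i * T (i + 1))
    (hcomm : ∀ i j, 1 ≤ i → i + 1 ≤ k + 1 → 1 ≤ j → j + 1 ≤ k + 1 →
      (i + 1 < j ∨ j + 1 < i) → T i * T j = T j * T i)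
    (hyT : ∀ i j, 1 ≤ i → i ≤ k + 1 → 1 ≤ j → j + 1 ≤ k + 1 → i ≠ j → i ≠ j + 1 →
      y i * T j = T j * y i)
    (hzT : ∀ i j, 1 ≤ i → i ≤ k + 1 → 1 ≤ j → j + 1 ≤ k + 1 → i ≠ j → i ≠ j + 1 →
      z i * T j = T j * z i)
    (hy : ∀ i, 1 ≤ i → i + 1 ≤ k + 1 → y (i + 1) = (T i)⁻¹ * y i * (T i)⁻¹)
    (t : ℝ)
    (v : Fin k → ℝ)
    (L : List (Fin k))
    (hadm : AdmissibleSeq t v L)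
    (hnt : ∀ n, ∀ j : Fin k, nextSeq t v (L.drop n) j ≠ t) :
    AdmissibleSeq t (Fin.snoc v t) (L.map Fin.castSucc) ∧
    downStar T (k + 1)
        (rankOf (nextSeq t (Fin.snoc v t) (L.map Fin.castSucc)) (Fin.last k)) *
      specialBraid T y z t (Fin.snoc v t) (L.map Fin.castSucc) =
    specialBraid T y z t v L *
      downStar T (k + 1) (rankOf (Fin.snoc v t : Fin (k+1) → ℝ) (Fin.last k)) := by
  refine ⟨admissibleSeq_snoc hadm hnt, ?_⟩
  rw [downStar_succ_eq_cornerTrain _ (rankOf_le _ _),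
    downStar_succ_eq_cornerTrain _ (rankOf_le _ _), nextSeq_snoc]
  exact cornerTrain_mul_specialBraid_snoc ⟨hbraid, hcomm⟩ hyT hy hzT hnt

/-- Adjoining a stationary strand at the corner point `t` transforms the special braid by
the homomorphism `φ₋` fixing the generators: with `i`, `i′` the ranks of `t` in the initial
and final tuples, `T*_{k+1↘i′} · B⁽ᵏ⁺¹⁾(v′; i⃗) = B⁽ᵏ⁾(v; i⃗) · T*_{k+1↘i}`. -/
theorem specialBraid_snoc_corner_point (k : ℕ) (T y z : ℕ → G)
    (hbraid : ∀ i, 1 ≤ i → i + 2 ≤ k + 1 →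
      T i * T (i + 1) * T i = T (i + 1) * T i * T (i + 1))
    (hcomm : ∀ i j, 1 ≤ i → i + 1 ≤ k + 1 → 1 ≤ j → j + 1 ≤ k + 1 →
      (i + 1 < j ∨ j + 1 < i) → T i * T j = T j * T i)
    (hyT : ∀ i j, 1 ≤ i → i ≤ k + 1 → 1 ≤ j → j + 1 ≤ k + 1 → i ≠ j → i ≠ j + 1 →
      y i * T j = T j * y i)
    (hzT : ∀ i j, 1 ≤ i → i ≤ k + 1 → 1 ≤ j → j + 1 ≤ k + 1 → i ≠ j → i ≠ j + 1 →
      z i * T j = T j * z i)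
    (hy : ∀ i, 1 ≤ i → i + 1 ≤ k + 1 → y (i + 1) = (T i)⁻¹ * y i * (T i)⁻¹)
    (hz : ∀ i, 1 ≤ i → i + 1 ≤ k + 1 → z (i + 1) = T i * z i * T i)
    (hyy : ∀ i j, 1 ≤ i → i ≤ k + 1 → 1 ≤ j → j ≤ k + 1 → y i * y j = y j * y i)
    (hzz : ∀ i j, 1 ≤ i → i ≤ k + 1 → 1 ≤ j → j ≤ k + 1 → z i * z j = z j * z i)
    (hmix : 2 ≤ k + 1 → z 1 * T 1 * y 1 * (T 1)⁻¹ = (T 1)⁻¹ * y 1 * (T 1)⁻¹ * z 1)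
    (s t : ℝ) (hs : 0 < s) (ht : t = 1 / (s + 1))
    (v : Fin k → ℝ) (hv : ∀ i, 0 < v i ∧ v i < 1) (hvt : ∀ i, v i ≠ t)
    (L : List (Fin k))
    (hadm : AdmissibleSeq t v L)
    (hnt : ∀ n, ∀ j : Fin k, nextSeq t v (L.drop n) j ≠ t) :
    AdmissibleSeq t (Fin.snoc v t) (L.map Fin.castSucc) ∧
    downStar T (k + 1)
        (rankOf (nextSeq t (Fin.snoc v t) (L.map Fin.castSucc)) (Fin.last k)) *
      specialBraid T y z t (Fin.snoc v t) (L.map Fin.castSucc) =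
    specialBraid T y z t v L *
      downStar T (k + 1) (rankOf (Fin.snoc v t : Fin (k+1) → ℝ) (Fin.last k)) :=
  specialBraid_snoc_corner_point_general k T y z hbraid hcomm hyT hzT hy t v L hadm hnt
end
end
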